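/- arXiv:2604.25722 — 3 statements merged into one kernel-verified Lean document; each statement's English description precedes it below -/
import Mathlib

section
/- Let H be a real Hilbert space and S a subspace of H. Let M : H → H be a continuous self-adjoint linear operator satisfying ⟨Mx, x⟩ ≥ c‖x‖² for some c > 0 (hence M is invertible), let D₁, …, D_m : H → H be continuous self-adjoint positive-semidefinite linear operators, and let λ₁, …, λ_m > 0. Suppose x : [0,T] → S is continuous, g : [0,T] → H is continuous, and y₁, …, y_m : [0,T] → S are continuously differentiable and satisfy: (i) ⟨M x(t) + Σ_{k=1}^m D_k y_k(t) − g(t), z⟩ = 0 for every z ∈ S and every t ∈ [0,T]; (ii) y_k′(t) + λ_k y_k(t) = x(t) for every t ∈ [0,T] and k = 1,…,m; (iii) y_k(0) = 0 for k = 1,…,m. Then ∫₀ᵀ ⟨M x(t), x(t)⟩ dt + Σ_{k=1}^m ⟨D_k y_k(T), y_k(T)⟩ ≤ ∫₀ᵀ ⟨M⁻¹ g(t), g(t)⟩ dt. -/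
/-!
Testing the weak equation with `z = x(t)` and using `x = y_k' + λ_k y_k` gives, pointwise in `t`,
`⟪M x, x⟫ + Σ_k d/dt ⟪D_k y_k, y_k⟫ ≤ 2⟪g, x⟫ - ⟪M x, x⟫ ≤ ⟪M⁻¹ g, g⟫`,
the last step being `0 ≤ ⟪M (M⁻¹ g - x), M⁻¹ g - x⟫`. Integrating over `[0, T]` and using
`y_k(0) = 0` yields the estimate.
-/

open MeasureTheory Set

local notation "⟪" x ", " y "⟫" => @inner ℝ _ _ x y

section InnerProductSpace

variable {E : Type*} [NormedAddCommGroup E] [InnerProductSpace ℝ E]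

theorem ContinuousOn.inner_map {α : Type*} [TopologicalSpace α] {A : E →L[ℝ] E} {u v : α → E}
    {s : Set α}
    (hu : ContinuousOn u s) (hv : ContinuousOn v s) : ContinuousOn (fun t => ⟪A (u t), v t⟫) s :=
  (A.continuous.comp_continuousOn hu).inner hv

namespace ContinuousLinearMap

theorem IsPositive.two_inner_le_of_apply_eq {M : E →L[ℝ] E} (hM : M.IsPositive)
    {a g : E} (ha : M a = g) (x : E) :
    2 * ⟪g, x⟫ ≤ ⟪M x, x⟫ + ⟪a, g⟫ := by
  subst ha
  have hsq := hM.inner_nonneg_left (a - x)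
  have hswap : ⟪M x, a⟫ = ⟪M a, x⟫ := by
    rw [hM.inner_left_eq_inner_right, real_inner_comm]
  rw [map_sub, inner_sub_left, inner_sub_right, inner_sub_right, hswap] at hsq
  linarith [real_inner_comm a (M a)]

end ContinuousLinearMap

theorem inner_map_le_of_add_smul_eq {D : E →L[ℝ] E} {lam : ℝ} {x y y' : E}
    (hDy : 0 ≤ ⟪D y, y⟫) (hlam : 0 ≤ lam) (h : y' + lam • y = x) :
    ⟪D y, y'⟫ ≤ ⟪D y, x⟫ := by
  rw [← h, inner_add_right, real_inner_smul_right]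
  nlinarith

theorem inner_add_sum_two_inner_le {ι : Type*} [Fintype ι]
    {M : E →L[ℝ] E} (hM : M.IsPositive) {D : ι → E →L[ℝ] E} (hD : ∀ k u, 0 ≤ ⟪D k u, u⟫)
    {lam : ι → ℝ} (hlam : ∀ k, 0 ≤ lam k) {a g x : E} {y y' : ι → E}
    (ha : M a = g) (hweak : ⟪M x + ∑ k, D k (y k) - g, x⟫ = 0)
    (hode : ∀ k, y' k + lam k • y k = x) :
    ⟪M x, x⟫ + ∑ k, 2 * ⟪D k (y k), y' k⟫ ≤ ⟪a, g⟫ := by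
  have htest : ⟪M x, x⟫ + ∑ k, ⟪D k (y k), x⟫ = ⟪g, x⟫ := by
    rw [inner_sub_left, inner_add_left, sum_inner] at hweak
    linarith
  have hmemory : ∑ k, 2 * ⟪D k (y k), y' k⟫ ≤ 2 * ∑ k, ⟪D k (y k), x⟫ := by
    rw [Finset.mul_sum]
    gcongr with k
    exact inner_map_le_of_add_smul_eq (hD k (y k)) (hlam k) (hode k)
  linarith [hM.two_inner_le_of_apply_eq ha x]

theorem HasDerivAt.inner_map_self {D : E →L[ℝ] E} (hD : D.IsSymmetric) {y : ℝ → E} {y' : E}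
    {t : ℝ} (hy : HasDerivAt y y' t) :
    HasDerivAt (fun s => ⟪D (y s), y s⟫) (2 * ⟪D (y t), y'⟫) t := by
  refine ((D.hasFDerivAt.comp_hasDerivAt t hy).inner ℝ hy).congr_deriv ?_
  have hswap : ⟪D y', y t⟫ = ⟪D (y t), y'⟫ := (hD y' (y t)).trans (real_inner_comm _ _)
  rw [Function.comp_apply, hswap]
  ring

theorem inner_map_self_sub_eq_integral {D : E →L[ℝ] E} (hD : D.IsSymmetric)
    {y y' : ℝ → E} {a b : ℝ} (hy : ∀ t ∈ uIcc a b, HasDerivAt y (y' t) t)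
    (hy' : ContinuousOn y' (uIcc a b)) :
    ⟪D (y b), y b⟫ - ⟪D (y a), y a⟫ = ∫ t in a..b, 2 * ⟪D (y t), y' t⟫ := by
  refine (intervalIntegral.integral_eq_sub_of_hasDerivAt
    (fun t ht => (hy t ht).inner_map_self hD) ?_).symm
  exact (continuousOn_const.mul ((HasDerivAt.continuousOn hy).inner_map hy')).intervalIntegrable

end InnerProductSpace

theorem a_priori_estimate_continuous_general
    {H : Type*} [NormedAddCommGroup H] [InnerProductSpace ℝ H]
    (S : Submodule ℝ H)
    (M Minv : H →L[ℝ] H)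
    (hMsa : ∀ u v : H, ⟪M u, v⟫ = ⟪u, M v⟫)
    (c : ℝ) (hc : 0 < c)
    (hMcoer : ∀ u : H, c * ‖u‖ ^ 2 ≤ ⟪M u, u⟫)
    (hMinv₂ : ∀ u : H, M (Minv u) = u)
    (m : ℕ) (D : Fin m → H →L[ℝ] H)
    (hDsa : ∀ k, ∀ u v : H, ⟪D k u, v⟫ = ⟪u, D k v⟫)
    (hDpos : ∀ k, ∀ u : H, 0 ≤ ⟪D k u, u⟫)
    (lam : Fin m → ℝ) (hlam : ∀ k, 0 < lam k)
    (T : ℝ) (hT : 0 ≤ T)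
    (x g : ℝ → H) (y y' : Fin m → ℝ → H)
    (hx_mem : ∀ t ∈ Icc (0:ℝ) T, x t ∈ S)
    (hx_cont : ContinuousOn x (Icc 0 T))
    (hg_cont : ContinuousOn g (Icc 0 T))
    (hy_deriv : ∀ k, ∀ t ∈ Icc (0:ℝ) T, HasDerivAt (y k) (y' k t) t)
    (hy'_cont : ∀ k, ContinuousOn (y' k) (Icc 0 T))
    (hweak : ∀ t ∈ Icc (0:ℝ) T, ∀ z ∈ S,
      ⟪M (x t) + ∑ k, D k (y k t) - g t, z⟫ = 0)
    (hode : ∀ k, ∀ t ∈ Icc (0:ℝ) T, y' k t + lam k • y k t = x t)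
    (hinit : ∀ k, y k 0 = 0) :
    (∫ t in (0:ℝ)..T, ⟪M (x t), x t⟫) + ∑ k, ⟪D k (y k T), y k T⟫ ≤
      ∫ t in (0:ℝ)..T, ⟪Minv (g t), g t⟫ := by
  have hM : M.IsPositive :=
    (M.isPositive_iff).2 ⟨hMsa, fun u => (by positivity : 0 ≤ c * ‖u‖ ^ 2).trans (hMcoer u)⟩
  rw [← uIcc_of_le hT] at hx_cont hg_cont hy_deriv hy'_cont
  have henergy : ∀ k, ⟪D k (y k T), y k T⟫ = ∫ t in (0:ℝ)..T, 2 * ⟪D k (y k t), y' k t⟫ := by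
    intro k
    simpa [hinit] using inner_map_self_sub_eq_integral (hDsa k) (hy_deriv k) (hy'_cont k)
  have hIx : IntervalIntegrable (fun t => ⟪M (x t), x t⟫) volume 0 T :=
    (hx_cont.inner_map hx_cont).intervalIntegrable
  have hIy : ∀ k ∈ Finset.univ, IntervalIntegrable
      (fun t => 2 * ⟪D k (y k t), y' k t⟫) volume 0 T := fun k _ =>
    (continuousOn_const.mul ((HasDerivAt.continuousOn (hy_deriv k)).inner_map
      (hy'_cont k))).intervalIntegrable
  have hIsum : IntervalIntegrable (fun t => ∑ k, 2 * ⟪D k (y k t), y' k t⟫) volume 0 T := by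
    simpa only [← Finset.sum_fn] using IntervalIntegrable.sum _ hIy
  have hIg : IntervalIntegrable (fun t => ⟪Minv (g t), g t⟫) volume 0 T :=
    (hg_cont.inner_map hg_cont).intervalIntegrable
  calc (∫ t in (0:ℝ)..T, ⟪M (x t), x t⟫) + ∑ k, ⟪D k (y k T), y k T⟫
      = ∫ t in (0:ℝ)..T, ⟪M (x t), x t⟫ + ∑ k, 2 * ⟪D k (y k t), y' k t⟫ := by
        rw [intervalIntegral.integral_add hIx hIsum, intervalIntegral.integral_finsetSum hIy,
          Finset.sum_congr rfl fun k _ => henergy k]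
    _ ≤ ∫ t in (0:ℝ)..T, ⟪Minv (g t), g t⟫ :=
        intervalIntegral.integral_mono_on hT (hIx.add hIsum) hIg fun t ht =>
          inner_add_sum_two_inner_le hM hDpos (fun k => (hlam k).le) (hMinv₂ (g t))
            (hweak t ht (x t) (hx_mem t ht)) (fun k => hode k t ht)

/-- Abstract Hilbert-space form of Theorem 1 (a priori estimate for the localized
homogenized filtration problem with memory). -/
theorem a_priori_estimate_continuous
    {H : Type*} [NormedAddCommGroup H] [InnerProductSpace ℝ H] [CompleteSpace H]
    (S : Submodule ℝ H)
    (M Minv : H →L[ℝ] H)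
    (hMsa : ∀ u v : H, ⟪M u, v⟫ = ⟪u, M v⟫)
    (c : ℝ) (hc : 0 < c)
    (hMcoer : ∀ u : H, c * ‖u‖ ^ 2 ≤ ⟪M u, u⟫)
    (hMinv₁ : ∀ u : H, Minv (M u) = u)
    (hMinv₂ : ∀ u : H, M (Minv u) = u)
    (m : ℕ) (D : Fin m → H →L[ℝ] H)
    (hDsa : ∀ k, ∀ u v : H, ⟪D k u, v⟫ = ⟪u, D k v⟫)
    (hDpos : ∀ k, ∀ u : H, 0 ≤ ⟪D k u, u⟫)
    (lam : Fin m → ℝ) (hlam : ∀ k, 0 < lam k)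
    (T : ℝ) (hT : 0 ≤ T)
    (x g : ℝ → H) (y y' : Fin m → ℝ → H)
    (hx_mem : ∀ t ∈ Icc (0:ℝ) T, x t ∈ S)
    (hx_cont : ContinuousOn x (Icc 0 T))
    (hg_cont : ContinuousOn g (Icc 0 T))
    (hy_mem : ∀ k, ∀ t ∈ Icc (0:ℝ) T, y k t ∈ S)
    (hy_deriv : ∀ k, ∀ t ∈ Icc (0:ℝ) T, HasDerivAt (y k) (y' k t) t)
    (hy'_cont : ∀ k, ContinuousOn (y' k) (Icc 0 T))
    (hweak : ∀ t ∈ Icc (0:ℝ) T, ∀ z ∈ S,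
      ⟪M (x t) + ∑ k, D k (y k t) - g t, z⟫ = 0)
    (hode : ∀ k, ∀ t ∈ Icc (0:ℝ) T, y' k t + lam k • y k t = x t)
    (hinit : ∀ k, y k 0 = 0) :
    (∫ t in (0:ℝ)..T, ⟪M (x t), x t⟫) + ∑ k, ⟪D k (y k T), y k T⟫ ≤
      ∫ t in (0:ℝ)..T, ⟪Minv (g t), g t⟫ :=
  a_priori_estimate_continuous_general S M Minv hMsa c hc hMcoer hMinv₂ m D hDsa hDpos lam hlam T hT
    x g y y' hx_mem hx_cont hg_cont hy_deriv hy'_cont hweak hode hinit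
end

section
/- Let H be a real Hilbert space and S a subspace of H. Let M : H → H be a continuous self-adjoint linear operator satisfying ⟨Mx, x⟩ ≥ c‖x‖² for some c > 0 (hence M is invertible), let D₁, …, D_m : H → H be continuous self-adjoint positive-semidefinite linear operators, and let λ₁, …, λ_m > 0. Let τ > 0, σ ≥ 1/2, N ∈ ℕ, and for any sequence (w^n) write w^{n+σ} := σ w^{n+1} + (1−σ) w^n. Suppose v⁰, …, v^N ∈ S, g^{0+σ}, …, g^{(N−1)+σ} ∈ H, and y_k⁰, …, y_k^N ∈ S (k = 1,…,m) satisfy: (i) ⟨M v^{n+σ} + Σ_{k=1}^m D_k y_k^{n+σ} − g^{n+σ}, z⟩ = 0 for every z ∈ S and n = 0,…,N−1; (ii) (y_k^{n+1} − y_k^n)/τ + λ_k y_k^{n+σ} = v^{n+σ} for n = 0,…,N−1 and k = 1,…,m; (iii) y_k⁰ = 0 for k = 1,…,m. Then τ Σ_{n=0}^{N−1} ⟨M v^{n+σ}, v^{n+σ}⟩ + Σ_{k=1}^m ⟨D_k y_k^N, y_k^N⟩ ≤ τ Σ_{n=0}^{N−1} ⟨M⁻¹ g^{n+σ}, g^{n+σ}⟩.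 -/
open MeasureTheory Set

local notation "⟪" x ", " y "⟫" => @inner ℝ _ _ x y

/-- Abstract Hilbert-space form of Theorem 2 (unconditional stability of the two-level
weighted time-discretization scheme with weight σ ≥ 1/2). -/
theorem stability_two_level_scheme
    {H : Type*} [NormedAddCommGroup H] [InnerProductSpace ℝ H] [CompleteSpace H]
    (S : Submodule ℝ H)
    (M Minv : H →L[ℝ] H)
    (hMsa : ∀ u v : H, ⟪M u, v⟫ = ⟪u, M v⟫)
    (c : ℝ) (hc : 0 < c)
    (hMcoer : ∀ u : H, c * ‖u‖ ^ 2 ≤ ⟪M u, u⟫)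
    (hMinv₁ : ∀ u : H, Minv (M u) = u)
    (hMinv₂ : ∀ u : H, M (Minv u) = u)
    (m : ℕ) (D : Fin m → H →L[ℝ] H)
    (hDsa : ∀ k, ∀ u v : H, ⟪D k u, v⟫ = ⟪u, D k v⟫)
    (hDpos : ∀ k, ∀ u : H, 0 ≤ ⟪D k u, u⟫)
    (lam : Fin m → ℝ) (hlam : ∀ k, 0 < lam k)
    (τ σ : ℝ) (hτ : 0 < τ) (hσ : 1/2 ≤ σ)
    (N : ℕ)
    (v : ℕ → H) (gσ : ℕ → H) (y : Fin m → ℕ → H)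
    (hv_mem : ∀ n ≤ N, v n ∈ S)
    (hy_mem : ∀ k, ∀ n ≤ N, y k n ∈ S)
    (hweak : ∀ n < N, ∀ z ∈ S,
      ⟪M (σ • v (n+1) + (1-σ) • v n)
        + ∑ k, D k (σ • y k (n+1) + (1-σ) • y k n) - gσ n, z⟫ = 0)
    (hode : ∀ k, ∀ n < N,
      τ⁻¹ • (y k (n+1) - y k n) + lam k • (σ • y k (n+1) + (1-σ) • y k n)
        = σ • v (n+1) + (1-σ) • v n)
    (hinit : ∀ k, y k 0 = 0) :
    τ * ∑ n ∈ Finset.range N,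
        ⟪M (σ • v (n+1) + (1-σ) • v n), σ • v (n+1) + (1-σ) • v n⟫
      + ∑ k, ⟪D k (y k N), y k N⟫
    ≤ τ * ∑ n ∈ Finset.range N, ⟪Minv (gσ n), gσ n⟫ := by
  -- per-step inequality
  have key : ∀ n ∈ Finset.range N,
      τ * ⟪M (σ • v (n+1) + (1-σ) • v n), σ • v (n+1) + (1-σ) • v n⟫
        + ∑ k, (⟪D k (y k (n+1)), y k (n+1)⟫ - ⟪D k (y k n), y k n⟫)
      ≤ τ * ⟪Minv (gσ n), gσ n⟫ := by
    intro n hn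
    rw [Finset.mem_range] at hn
    set vs : H := σ • v (n+1) + (1-σ) • v n with hvs
    have hvS : vs ∈ S :=
      S.add_mem (S.smul_mem _ (hv_mem _ hn)) (S.smul_mem _ (hv_mem _ hn.le))
    -- weak form tested with vs
    have hW : ⟪M vs, vs⟫
        + ∑ k, ⟪D k (σ • y k (n+1) + (1-σ) • y k n), vs⟫ = ⟪gσ n, vs⟫ := by
      have h := hweak n hn vs hvS
      rw [inner_sub_left, inner_add_left, sum_inner] at h
      linarith
    -- per-k lower bound
    have hk : ∀ k : Fin m,
        (1/2) * (⟪D k (y k (n+1)), y k (n+1)⟫ - ⟪D k (y k n), y k n⟫)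
          ≤ τ * ⟪D k (σ • y k (n+1) + (1-σ) • y k n), vs⟫ := by
      intro k
      have hodek := hode k n hn
      rw [hvs, ← hodek, inner_add_right, real_inner_smul_right, real_inner_smul_right]
      have hr' : ⟪D k (y k n), y k (n+1)⟫ = ⟪D k (y k (n+1)), y k n⟫ := by
        rw [hDsa k, real_inner_comm]
      have hexp1 : ⟪D k (σ • y k (n+1) + (1-σ) • y k n), y k (n+1) - y k n⟫
          = σ * (⟪D k (y k (n+1)), y k (n+1)⟫ - ⟪D k (y k (n+1)), y k n⟫)
            + (1-σ) * (⟪D k (y k (n+1)), y k n⟫ - ⟪D k (y k n), y k n⟫) := by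
        simp only [map_add, ContinuousLinearMap.map_smul, inner_add_left, inner_sub_right,
          real_inner_smul_left, hr']
        ring
      have hexp2 : ⟪D k (σ • y k (n+1) + (1-σ) • y k n), σ • y k (n+1) + (1-σ) • y k n⟫
          = σ^2 * ⟪D k (y k (n+1)), y k (n+1)⟫ + 2*σ*(1-σ) * ⟪D k (y k (n+1)), y k n⟫
            + (1-σ)^2 * ⟪D k (y k n), y k n⟫ := by
        simp only [map_add, ContinuousLinearMap.map_smul, inner_add_left, inner_add_right,
          real_inner_smul_left, real_inner_smul_right, hr']
        ring
      have hDd : 0 ≤ ⟪D k (y k (n+1) - y k n), y k (n+1) - y k n⟫ := hDpos k _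
      have hDdexp : ⟪D k (y k (n+1) - y k n), y k (n+1) - y k n⟫
          = ⟪D k (y k (n+1)), y k (n+1)⟫ - 2 * ⟪D k (y k (n+1)), y k n⟫
            + ⟪D k (y k n), y k n⟫ := by
        simp only [map_sub, inner_sub_left, inner_sub_right, hr']
        ring
      have hyσ : 0 ≤ ⟪D k (σ • y k (n+1) + (1-σ) • y k n), σ • y k (n+1) + (1-σ) • y k n⟫ :=
        hDpos k _
      rw [hexp1, hexp2]
      rw [hexp2] at hyσ
      rw [hDdexp] at hDd
      have hττ : τ * τ⁻¹ = 1 := mul_inv_cancel₀ hτ.ne'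
      have h1 : 0 ≤ (σ - 1/2) * (⟪D k (y k (n+1)), y k (n+1)⟫
          - 2 * ⟪D k (y k (n+1)), y k n⟫ + ⟪D k (y k n), y k n⟫) :=
        mul_nonneg (by linarith) hDd
      have h2 : 0 ≤ τ * (lam k * (σ^2 * ⟪D k (y k (n+1)), y k (n+1)⟫
          + 2*σ*(1-σ) * ⟪D k (y k (n+1)), y k n⟫ + (1-σ)^2 * ⟪D k (y k n), y k n⟫)) :=
        mul_nonneg hτ.le (mul_nonneg (hlam k).le hyσ)
      rw [mul_add, ← mul_assoc, hττ, one_mul]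
      nlinarith [h1, h2]
    -- RHS bound: 2 ⟪g, vs⟫ ≤ ⟪Minv g, g⟫ + ⟪M vs, vs⟫
    have hRHS : 2 * ⟪gσ n, vs⟫ ≤ ⟪Minv (gσ n), gσ n⟫ + ⟪M vs, vs⟫ := by
      set w : H := vs - Minv (gσ n) with hw
      have h0 : 0 ≤ ⟪M w, w⟫ :=
        le_trans (by positivity) (hMcoer w)
      have hexp : ⟪M w, w⟫ = ⟪M vs, vs⟫ - 2 * ⟪gσ n, vs⟫ + ⟪Minv (gσ n), gσ n⟫ := by
        rw [hw, map_sub, inner_sub_left, inner_sub_right, inner_sub_right]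
        have e1 : ⟪M (Minv (gσ n)), vs⟫ = ⟪gσ n, vs⟫ := by rw [hMinv₂]
        have e2 : ⟪M vs, Minv (gσ n)⟫ = ⟪gσ n, vs⟫ := by
          rw [hMsa vs (Minv (gσ n)), hMinv₂, real_inner_comm]
        have e3 : ⟪M (Minv (gσ n)), Minv (gσ n)⟫ = ⟪Minv (gσ n), gσ n⟫ := by
          rw [hMinv₂, real_inner_comm]
        rw [e1, e2, e3]; ring
      linarith
    -- sum the per-k bounds
    have hsum : (1/2) * ∑ k, (⟪D k (y k (n+1)), y k (n+1)⟫ - ⟪D k (y k n), y k n⟫)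
        ≤ τ * ∑ k, ⟪D k (σ • y k (n+1) + (1-σ) • y k n), vs⟫ := by
      rw [Finset.mul_sum, Finset.mul_sum]
      exact Finset.sum_le_sum fun k _ => hk k
    have hW' : ∑ k, ⟪D k (σ • y k (n+1) + (1-σ) • y k n), vs⟫
        = ⟪gσ n, vs⟫ - ⟪M vs, vs⟫ := by linarith
    rw [hW'] at hsum
    nlinarith [mul_le_mul_of_nonneg_left hRHS hτ.le]
  have hsum := Finset.sum_le_sum key
  rw [Finset.sum_add_distrib, ← Finset.mul_sum, ← Finset.mul_sum, Finset.sum_comm] at hsum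
  have htel : ∀ k : Fin m,
      ∑ n ∈ Finset.range N, (⟪D k (y k (n+1)), y k (n+1)⟫ - ⟪D k (y k n), y k n⟫)
        = ⟪D k (y k N), y k N⟫ := by
    intro k
    rw [Finset.sum_range_sub (fun n => ⟪D k (y k n), y k n⟫)]
    simp [hinit k]
  rw [Finset.sum_congr rfl fun k _ => htel k] at hsum
  exact hsum
end

section
/- Let f : [0,∞) → ℝ be Lipschitz continuous with constant L ≥ 0, let m ∈ ℕ, let (λ_k)_{k>m} be reals with λ_k ≥ λ_{m+1} > 0, and let (c_k)_{k>m} be reals with Σ_{k>m} |c_k|/λ_k < ∞. Then the function t ↦ Σ_{k>m} c_k e^{−λ_k t} f(t) is integrable on (0,∞) and |∫₀^∞ ( Σ_{k>m} c_k e^{−λ_k t} ) f(t) dt − ( Σ_{k>m} c_k/λ_k ) f(0)| ≤ L Σ_{k>m} |c_k|/λ_k². -/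
/-!
Mode by mode, `∫₀^∞ c e^{-λt} f(t) dt - (c/λ) f(0) = c ∫₀^∞ e^{-λt} (f(t) - f(0)) dt`,
and `|f(t) - f(0)| ≤ L t` together with `∫₀^∞ t e^{-λt} dt = 1/λ²` bounds it by
`L |c| / λ²`. The same estimate `|f(t)| ≤ |f(0)| + L t` gives
`∫₀^∞ |c e^{-λt} f(t)| dt ≤ |c| (|f(0)|/λ + L/λ²)`, which is summable because
`λ ≥ λ_{m+1}`; so the series can be integrated term by term and the mode-wise bounds summed.
-/

open MeasureTheory Set Real

lemma integral_exp_neg_mul_Ioi_zero {l : ℝ} (hl : 0 < l) :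
    ∫ t in Ioi (0 : ℝ), exp (-l * t) = 1 / l := by
  rw [integral_exp_mul_Ioi (neg_lt_zero.2 hl)]
  simp [neg_div]

lemma integrableOn_mul_exp_neg_mul_Ioi {l : ℝ} (hl : 0 < l) :
    IntegrableOn (fun t : ℝ => t * exp (-l * t)) (Ioi 0) := by
  simpa using integrableOn_rpow_mul_exp_neg_mul_rpow (s := 1) (p := 1) (by norm_num) one_pos hl

lemma integral_mul_exp_neg_mul_Ioi {l : ℝ} (hl : 0 < l) :
    ∫ t in Ioi (0 : ℝ), t * exp (-l * t) = 1 / l ^ 2 := by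
  have h := integral_rpow_mul_exp_neg_mul_Ioi two_pos hl
  norm_num [← neg_mul] at h
  simpa using h

lemma integrable_tsum_of_summable_integral_norm {α E ι : Type*} [MeasurableSpace α]
    {μ : Measure α} [NormedAddCommGroup E] [CompleteSpace E] [SecondCountableTopology E]
    [MeasurableSpace E] [BorelSpace E] [Countable ι] {F : ι → α → E}
    (hF_int : ∀ i, Integrable (F i) μ) (hF_sum : Summable fun i ↦ ∫ a, ‖F i a‖ ∂μ) :
    Integrable (fun a ↦ ∑' i, F i a) μ := by
  refine ⟨(AEMeasurable.tsum fun i ↦ (hF_int i).aemeasurable).aestronglyMeasurable, ?_⟩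
  calc ∫⁻ a, ‖∑' i, F i a‖ₑ ∂μ ≤ ∫⁻ a, ∑' i, ‖F i a‖ₑ ∂μ :=
        lintegral_mono fun a ↦ enorm_tsum_le_tsum_enorm
    _ = ∑' i, ENNReal.ofReal (∫ a, ‖F i a‖ ∂μ) := by
        rw [lintegral_tsum fun i ↦ (hF_int i).aestronglyMeasurable.enorm]
        exact tsum_congr fun i ↦ (ofReal_integral_norm_eq_lintegral_enorm (hF_int i)).symm
    _ = ENNReal.ofReal (∑' i, ∫ a, ‖F i a‖ ∂μ) := (ENNReal.ofReal_tsum_of_nonneg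
          (fun i ↦ integral_nonneg fun a ↦ norm_nonneg _) hF_sum).symm
    _ < ⊤ := ENNReal.ofReal_lt_top

section SingleMode

variable {f : ℝ → ℝ} {L l : ℝ}

lemma norm_exp_neg_mul_mul_le (hf : ∀ t ∈ Ioi (0 : ℝ), |f t - f 0| ≤ L * t) :
    ∀ᵐ t ∂volume.restrict (Ioi (0 : ℝ)),
      ‖exp (-l * t) * f t‖ ≤ |f 0| * exp (-l * t) + L * (t * exp (-l * t)) := by
  filter_upwards [ae_restrict_mem measurableSet_Ioi] with t ht
  have hft : |f t| ≤ |f 0| + L * t := by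
    have := abs_sub_abs_le_abs_sub (f t) (f 0)
    linarith [hf t ht]
  rw [norm_mul, norm_of_nonneg (exp_pos _).le, Real.norm_eq_abs]
  nlinarith [exp_pos (-l * t)]

lemma integrableOn_exp_neg_mul_majorant (hl : 0 < l) (a b : ℝ) :
    IntegrableOn (fun t => a * exp (-l * t) + b * (t * exp (-l * t))) (Ioi 0) :=
  ((exp_neg_integrableOn_Ioi 0 hl).const_mul a).add
    ((integrableOn_mul_exp_neg_mul_Ioi hl).const_mul b)

lemma integral_exp_neg_mul_majorant (hl : 0 < l) (a b : ℝ) :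
    ∫ t in Ioi (0 : ℝ), a * exp (-l * t) + b * (t * exp (-l * t)) = a / l + b / l ^ 2 := by
  rw [integral_add ((exp_neg_integrableOn_Ioi 0 hl).const_mul a)
    ((integrableOn_mul_exp_neg_mul_Ioi hl).const_mul b), integral_const_mul, integral_const_mul,
    integral_exp_neg_mul_Ioi_zero hl, integral_mul_exp_neg_mul_Ioi hl, mul_one_div, mul_one_div]

variable (hf : ∀ t ∈ Ioi (0 : ℝ), |f t - f 0| ≤ L * t)
  (hfm : AEStronglyMeasurable f (volume.restrict (Ioi 0)))
include hf hfm

lemma integrableOn_exp_neg_mul_mul (hl : 0 < l) :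
    IntegrableOn (fun t => exp (-l * t) * f t) (Ioi 0) :=
  (integrableOn_exp_neg_mul_majorant hl _ _).mono'
    ((by fun_prop : Continuous fun t => exp (-l * t)).aestronglyMeasurable.mul hfm)
    (norm_exp_neg_mul_mul_le hf)

lemma integral_norm_exp_neg_mul_mul_le (hl : 0 < l) :
    ∫ t in Ioi (0 : ℝ), ‖exp (-l * t) * f t‖ ≤ |f 0| / l + L / l ^ 2 := by
  rw [← integral_exp_neg_mul_majorant hl]
  exact integral_mono_ae (integrableOn_exp_neg_mul_mul hf hfm hl).norm
    (integrableOn_exp_neg_mul_majorant hl _ _) (norm_exp_neg_mul_mul_le hf)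

lemma abs_integral_exp_neg_mul_mul_sub_le (hl : 0 < l) :
    |(∫ t in Ioi (0 : ℝ), exp (-l * t) * f t) - f 0 / l| ≤ L / l ^ 2 := by
  have hf0 : f 0 / l = ∫ t in Ioi (0 : ℝ), exp (-l * t) * f 0 := by
    rw [integral_mul_const, integral_exp_neg_mul_Ioi_zero hl, one_div_mul_eq_div]
  rw [hf0, ← integral_sub (integrableOn_exp_neg_mul_mul hf hfm hl)
    ((exp_neg_integrableOn_Ioi 0 hl).mul_const (f 0)), ← Real.norm_eq_abs]
  calc ‖∫ t in Ioi (0 : ℝ), exp (-l * t) * f t - exp (-l * t) * f 0‖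
      ≤ ∫ t in Ioi (0 : ℝ), L * (t * exp (-l * t)) := by
        refine norm_integral_le_of_norm_le
          ((integrableOn_mul_exp_neg_mul_Ioi hl).const_mul L) ?_
        filter_upwards [ae_restrict_mem measurableSet_Ioi] with t ht
        rw [← mul_sub, norm_mul, norm_of_nonneg (exp_pos _).le, Real.norm_eq_abs]
        nlinarith [exp_pos (-l * t), hf t ht]
    _ = L / l ^ 2 := by
        rw [integral_const_mul, integral_mul_exp_neg_mul_Ioi hl, mul_one_div]

end SingleMode

section Series

variable {ι : Type*} {f : ℝ → ℝ} {L l₀ : ℝ} {c l : ι → ℝ}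

lemma summable_abs_div_sq (hl₀ : 0 < l₀) (hl : ∀ i, l₀ ≤ l i)
    (hc : Summable fun i => |c i| / l i) : Summable fun i => |c i| / l i ^ 2 :=
  (hc.div_const l₀).of_nonneg_of_le (fun i => by positivity) fun i => by
    rw [sq, ← div_div]
    exact div_le_div_of_nonneg_left
      (div_nonneg (abs_nonneg _) (hl₀.trans_le (hl i)).le) hl₀ (hl i)

lemma tsum_mul_exp_neg_mul_mul (t : ℝ) :
    (∑' i, c i * exp (-l i * t)) * f t = ∑' i, c i * (exp (-l i * t) * f t) := by
  rw [← tsum_mul_right]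
  simp_rw [mul_assoc]

variable (hf : ∀ t ∈ Ioi (0 : ℝ), |f t - f 0| ≤ L * t)
  (hfm : AEStronglyMeasurable f (volume.restrict (Ioi 0)))
  (hl₀ : 0 < l₀) (hl : ∀ i, l₀ ≤ l i) (hc : Summable fun i => |c i| / l i)
include hf hfm hl₀ hl

lemma integrableOn_mul_exp_neg_mul_mul (i : ι) :
    IntegrableOn (fun t => c i * (exp (-l i * t) * f t)) (Ioi 0) :=
  (integrableOn_exp_neg_mul_mul hf hfm (hl₀.trans_le (hl i))).const_mul (c i)

include hc

lemma summable_integral_norm_mul_exp_neg_mul_mul :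
    Summable fun i => ∫ t in Ioi (0 : ℝ), ‖c i * (exp (-l i * t) * f t)‖ := by
  refine ((hc.mul_left |f 0|).add ((summable_abs_div_sq hl₀ hl hc).mul_left L)).of_nonneg_of_le
    (fun i => integral_nonneg fun t => norm_nonneg _) fun i => ?_
  have hli := hl₀.trans_le (hl i)
  simp_rw [norm_mul (c i), integral_const_mul, Real.norm_eq_abs]
  calc |c i| * ∫ t in Ioi (0 : ℝ), ‖exp (-l i * t) * f t‖
      ≤ |c i| * (|f 0| / l i + L / l i ^ 2) :=
        mul_le_mul_of_nonneg_left (integral_norm_exp_neg_mul_mul_le hf hfm hli) (abs_nonneg _)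
    _ = |f 0| * (|c i| / l i) + L * (|c i| / l i ^ 2) := by ring

variable [Countable ι]

lemma integrableOn_tsum_mul_exp_neg_mul_mul :
    IntegrableOn (fun t => (∑' i, c i * exp (-l i * t)) * f t) (Ioi 0) := by
  simp_rw [tsum_mul_exp_neg_mul_mul]
  exact integrable_tsum_of_summable_integral_norm
    (integrableOn_mul_exp_neg_mul_mul hf hfm hl₀ hl)
    (summable_integral_norm_mul_exp_neg_mul_mul hf hfm hl₀ hl hc)

lemma abs_integral_tsum_mul_exp_neg_mul_mul_sub_le :
    |(∫ t in Ioi (0 : ℝ), (∑' i, c i * exp (-l i * t)) * f t) - (∑' i, c i / l i) * f 0|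
      ≤ L * ∑' i, |c i| / l i ^ 2 := by
  have hint := hasSum_integral_of_summable_integral_norm
    (integrableOn_mul_exp_neg_mul_mul hf hfm hl₀ hl)
    (summable_integral_norm_mul_exp_neg_mul_mul hf hfm hl₀ hl hc)
  have hcl : Summable fun i => c i / l i * f 0 := by
    refine (Summable.of_norm (hc.congr fun i => ?_)).mul_right (f 0)
    rw [Real.norm_eq_abs, abs_div, abs_of_pos (hl₀.trans_le (hl i))]
  simp_rw [tsum_mul_exp_neg_mul_mul]
  rw [← hint.tsum_eq, ← tsum_mul_right, ← hint.summable.tsum_sub hcl, ← Real.norm_eq_abs]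
  refine tsum_of_norm_bounded ((summable_abs_div_sq hl₀ hl hc).hasSum.mul_left L) fun i => ?_
  have hli := hl₀.trans_le (hl i)
  rw [integral_const_mul, show c i / l i * f 0 = c i * (f 0 / l i) by ring, ← mul_sub, norm_mul,
    Real.norm_eq_abs, Real.norm_eq_abs]
  calc |c i| * |(∫ t in Ioi (0 : ℝ), exp (-l i * t) * f t) - f 0 / l i|
      ≤ |c i| * (L / l i ^ 2) :=
        mul_le_mul_of_nonneg_left (abs_integral_exp_neg_mul_mul_sub_le hf hfm hli) (abs_nonneg _)
    _ = L * (|c i| / l i ^ 2) := by ring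

end Series

theorem memory_kernel_tail_delta_error_general
    (f : ℝ → ℝ) (L : ℝ)
    (hlip : ∀ s ∈ Set.Ici (0:ℝ), ∀ t ∈ Set.Ici (0:ℝ), |f s - f t| ≤ L * |s - t|)
    (m : ℕ) (c lam : ℕ → ℝ)
    (hlam1 : 0 < lam (m + 1)) (hlam : ∀ k, m < k → lam (m + 1) ≤ lam k)
    (hsum : Summable fun k : {k : ℕ // m < k} => |c k.1| / lam k.1) :
    IntegrableOn
        (fun t => (∑' k : {k : ℕ // m < k}, c k.1 * Real.exp (-lam k.1 * t)) * f t)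
        (Set.Ioi 0)
      ∧ |(∫ t in Set.Ioi (0:ℝ),
            (∑' k : {k : ℕ // m < k}, c k.1 * Real.exp (-lam k.1 * t)) * f t)
          - (∑' k : {k : ℕ // m < k}, c k.1 / lam k.1) * f 0|
        ≤ L * ∑' k : {k : ℕ // m < k}, |c k.1| / (lam k.1) ^ 2 := by
  have hf : ∀ t ∈ Ioi (0 : ℝ), |f t - f 0| ≤ L * t := fun t ht => by
    simpa [abs_of_pos (mem_Ioi.1 ht)] using hlip t (Ioi_subset_Ici_self ht) 0 self_mem_Ici
  have hfm : AEStronglyMeasurable f (volume.restrict (Ioi 0)) :=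
    ((LipschitzOnWith.of_dist_le' fun s hs t ht => by
      simpa only [Real.dist_eq] using hlip s hs t ht).continuousOn.mono
        Ioi_subset_Ici_self).aestronglyMeasurable measurableSet_Ioi
  have hlam' : ∀ k : {k : ℕ // m < k}, lam (m + 1) ≤ lam k.1 := fun k => hlam k.1 k.2
  exact ⟨integrableOn_tsum_mul_exp_neg_mul_mul hf hfm hlam1 hlam' hsum,
    abs_integral_tsum_mul_exp_neg_mul_mul_sub_le hf hfm hlam1 hlam' hsum⟩

/-- Error bound for approximating the tail of the memory kernel by a delta term:
|∫₀^∞ (Σ_{k>m} c_k e^{−λ_k t}) f(t) dt − (Σ_{k>m} c_k/λ_k) f(0)| ≤ L Σ_{k>m} |c_k|/λ_k². -/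
theorem memory_kernel_tail_delta_error
    (f : ℝ → ℝ) (L : ℝ) (hL : 0 ≤ L)
    (hlip : ∀ s ∈ Set.Ici (0:ℝ), ∀ t ∈ Set.Ici (0:ℝ), |f s - f t| ≤ L * |s - t|)
    (m : ℕ) (c lam : ℕ → ℝ)
    (hlam1 : 0 < lam (m + 1)) (hlam : ∀ k, m < k → lam (m + 1) ≤ lam k)
    (hsum : Summable fun k : {k : ℕ // m < k} => |c k.1| / lam k.1) :
    IntegrableOn
        (fun t => (∑' k : {k : ℕ // m < k}, c k.1 * Real.exp (-lam k.1 * t)) * f t)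
        (Set.Ioi 0)
      ∧ |(∫ t in Set.Ioi (0:ℝ),
            (∑' k : {k : ℕ // m < k}, c k.1 * Real.exp (-lam k.1 * t)) * f t)
          - (∑' k : {k : ℕ // m < k}, c k.1 / lam k.1) * f 0|
        ≤ L * ∑' k : {k : ℕ // m < k}, |c k.1| / (lam k.1) ^ 2 :=
  memory_kernel_tail_delta_error_general f L hlip m c lam hlam1 hlam hsum
end
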